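/- Every term graph over a signature Σ has a correct abstraction-prefix function for the λ-signature variant in at most one way: if P₁ and P₂ are both correct abstraction-prefix functions for a term graph G over the signature {@, λ, 0, S, •}, then P₁ = P₂. -/

import Mathlib

/-- A (root-connected) term graph over signature `Sig` with arity function `ar`,
    with vertex type `V`. -/
structure TermGraph (Sig : Type) (ar : Sig → ℕ) (V : Type) where
  lab : V → Sig
  args : V → List V
  root : V
  arity_ok : ∀ v, (args v).length = ar (lab v)
  rooted : ∀ v, Relation.ReflTransGen (fun a b => b ∈ args a) root v

/-- `R` is a bisimulation between term graphs `G₁` and `G₂`. -/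
def IsBisim {Sig : Type} {ar : Sig → ℕ} {V₁ V₂ : Type}
    (G₁ : TermGraph Sig ar V₁) (G₂ : TermGraph Sig ar V₂)
    (R : V₁ → V₂ → Prop) : Prop :=
  R G₁.root G₂.root ∧
  (∀ v w, R v w → G₁.lab v = G₂.lab w) ∧
  (∀ v w, R v w → List.Forall₂ R (G₁.args v) (G₂.args w))

/-- `G₁` and `G₂` are bisimilar. -/
def Bisim {Sig : Type} {ar : Sig → ℕ} {V₁ V₂ : Type}
    (G₁ : TermGraph Sig ar V₁) (G₂ : TermGraph Sig ar V₂) : Prop :=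
  ∃ R, IsBisim G₁ G₂ R

/-- `h` is a homomorphism of term graphs: it maps root to root, preserves labels,
    and commutes with the argument function. -/
def IsHom {Sig : Type} {ar : Sig → ℕ} {V₁ V₂ : Type}
    (G₁ : TermGraph Sig ar V₁) (G₂ : TermGraph Sig ar V₂) (h : V₁ → V₂) : Prop :=
  h G₁.root = G₂.root ∧
  (∀ v, G₂.lab (h v) = G₁.lab v) ∧
  (∀ v, G₂.args (h v) = (G₁.args v).map h)

/-- There exists a functional bisimulation (homomorphism) from `G₁` to `G₂`. -/
def FunBisim {Sig : Type} {ar : Sig → ℕ} {V₁ V₂ : Type}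
    (G₁ : TermGraph Sig ar V₁) (G₂ : TermGraph Sig ar V₂) : Prop :=
  ∃ h, IsHom G₁ G₂ h

/-- The signature for first-order lambda term graphs with scope delimiters:
    application, abstraction, variable occurrence, scope delimiter, black hole. -/
inductive LamSig : Type
  | app | lam | var | del | bh
deriving DecidableEq

/-- Arities for the lambda signature with scope delimiters. -/
def arL : LamSig → ℕ
  | .app => 2
  | .lam => 1
  | .var => 1
  | .del => 2
  | .bh  => 0

/-- A correct abstraction-prefix function for a term graph over the lambda signature
    with scope delimiters. -/
structure CorrectPrefix {V : Type} (G : TermGraph LamSig arL V)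
    (P : V → List V) : Prop where
  root : P G.root = []
  blackhole : ∀ v, G.lab v = LamSig.bh → P v = []
  lamCond : ∀ w v, G.lab w = LamSig.lam → (G.args w)[0]? = some v →
    P v = P w ++ [w]
  appCond : ∀ w v (k : ℕ), G.lab w = LamSig.app → (G.args w)[k]? = some v →
    P v = P w
  varCond : ∀ w v, G.lab w = LamSig.var → (G.args w)[0]? = some v →
    G.lab v = LamSig.lam ∧ P v ++ [v] = P w
  delCond0 : ∀ w v, G.lab w = LamSig.del → (G.args w)[0]? = some v →
    ∃ u, P v ++ [u] = P w
  delCond1 : ∀ w v, G.lab w = LamSig.del → (G.args w)[1]? = some v →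
    G.lab v = LamSig.lam ∧ P v ++ [v] = P w

/-!
Every vertex is reachable from the root, and along an edge `w → c` the correctness
conditions determine `P c` from `G.lab w`, `w` and `P w` alone: for variable and delimiter
vertices `P w = P c ++ [_]`, so `P c` is `P w` with its last entry dropped. Induction along a
path from the root then shows that any two correct prefix functions agree.
-/

def succPrefix {V : Type} : LamSig → V → List V → List V
  | .app, _, p => p
  | .lam, w, p => p ++ [w]
  | _, _, p => p.dropLast

theorem CorrectPrefix.eq_succPrefix_of_mem_args {V : Type} {G : TermGraph LamSig arL V}
    {P : V → List V} (hP : CorrectPrefix G P) {w c : V} (hc : c ∈ G.args w) :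
    P c = succPrefix (G.lab w) w (P w) := by
  obtain ⟨k, hk⟩ := List.mem_iff_getElem?.mp hc
  have hlen : k < arL (G.lab w) := G.arity_ok w ▸ (List.getElem?_eq_some_iff.mp hk).1
  cases hl : G.lab w <;> simp only [hl, arL] at hlen
  case app => exact hP.appCond w c k hl hk
  case lam =>
    obtain rfl : k = 0 := by omega
    exact hP.lamCond w c hl hk
  case var =>
    obtain rfl : k = 0 := by omega
    simp [succPrefix, ← (hP.varCond w c hl hk).2]
  case del =>
    obtain rfl | rfl : k = 0 ∨ k = 1 := by omega
    · obtain ⟨u, hu⟩ := hP.delCond0 w c hl hk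
      simp [succPrefix, ← hu]
    · simp [succPrefix, ← (hP.delCond1 w c hl hk).2]
  case bh => omega

/-- Uniqueness of correct abstraction-prefix functions: a term graph over the lambda
    signature with scope delimiters has at most one correct abstraction-prefix
    function. -/
theorem correctPrefix_unique {V : Type} (G : TermGraph LamSig arL V)
    (P₁ P₂ : V → List V)
    (h₁ : CorrectPrefix G P₁) (h₂ : CorrectPrefix G P₂) : P₁ = P₂ := by
  funext v
  induction G.rooted v with
  | refl => rw [h₁.root, h₂.root]
  | tail _ hc ih => rw [h₁.eq_succPrefix_of_mem_args hc, h₂.eq_succPrefix_of_mem_args hc, ih]
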